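/- arXiv:math/0503436 — 2 statements merged into one kernel-verified Lean document; each statement's English description precedes it below -/
import Mathlib

section
/- For every integer n ≥ 1, the total number of {0,1}-matrices, of any size p×q with p, q ≥ 1, having exactly n entries equal to 1, no zero row, and no zero column (a finite count, since necessarily p ≤ n and q ≤ n) equals, as a real number, (1/(4·n!)) · Σ_{r,s ≥ 0} (r·s)_n / 2^{r+s}, where (m)_n = m(m−1)⋯(m−n+1) is the falling factorial and the double series converges. -/
open Finset

namespace ZOM

abbrev Pred (n : ℕ) {p q : ℕ} (M : Fin p → Fin q → Bool) : Prop :=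
  (Finset.univ.filter fun x : Fin p × Fin q => M x.1 x.2 = true).card = n ∧
  (∀ i, ∃ j, M i j = true) ∧ (∀ j, ∃ i, M i j = true)

noncomputable def a (n p q : ℕ) : ℕ := Fintype.card {M : Fin p → Fin q → Bool // Pred n M}

example : a 1 1 1 = 1 := by decide

lemma a_eq_zero_left {n p q : ℕ} (h : n < p) : a n p q = 0 := by
  rw [a, Fintype.card_eq_zero_iff]
  constructor
  rintro ⟨M, hM, hr, -⟩
  have : (univ : Finset (Fin p)).card ≤
      (Finset.univ.filter fun x : Fin p × Fin q => M x.1 x.2 = true).card := by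
    apply Finset.card_le_card_of_injOn (fun i => (i, (hr i).choose))
    · intro i _
      simp [(hr i).choose_spec]
    · intro i _ i' _ hii'
      exact congrArg Prod.fst hii'
  simp only [card_univ, Fintype.card_fin, hM] at this
  omega

lemma a_eq_zero_right {n p q : ℕ} (h : n < q) : a n p q = 0 := by
  rw [a, Fintype.card_eq_zero_iff]
  constructor
  rintro ⟨M, hM, -, hc⟩
  have : (univ : Finset (Fin q)).card ≤
      (Finset.univ.filter fun x : Fin p × Fin q => M x.1 x.2 = true).card := by
    apply Finset.card_le_card_of_injOn (fun j => ((hc j).choose, j))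
    · intro j _
      simp [(hc j).choose_spec]
    · intro j _ j' _ hjj'
      exact congrArg Prod.snd hjj'
  simp only [card_univ, Fintype.card_fin, hM] at this
  omega

lemma a_pos_left {n p q : ℕ} (hn : 1 ≤ n) (h : p = 0) : a n p q = 0 := by
  subst h
  rw [a, Fintype.card_eq_zero_iff]
  constructor
  rintro ⟨M, hM, -, -⟩
  rw [Finset.filter_eq_empty_iff.2 (by rintro ⟨⟨i, hi⟩, -⟩; omega)] at hM
  simp at hM; omega

lemma a_pos_right {n p q : ℕ} (hn : 1 ≤ n) (h : q = 0) : a n p q = 0 := by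
  subst h
  rw [a, Fintype.card_eq_zero_iff]
  constructor
  rintro ⟨M, hM, -, -⟩
  rw [Finset.filter_eq_empty_iff.2 (by rintro ⟨-, ⟨j, hj⟩⟩; omega)] at hM
  simp at hM; omega

section Fiber

variable {r s : ℕ}

def ones (M : Fin r → Fin s → Bool) : ℕ :=
  (Finset.univ.filter fun x : Fin r × Fin s => M x.1 x.2 = true).card

def rows (M : Fin r → Fin s → Bool) : Finset (Fin r) :=
  univ.filter fun i => ∃ j, M i j = true

def cols (M : Fin r → Fin s → Bool) : Finset (Fin s) :=
  univ.filter fun j => ∃ i, M i j = true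

variable (A : Finset (Fin r)) (B : Finset (Fin s))


lemma oiSymm {α : Type*} [LinearOrder α] (s : Finset α) {k : ℕ} (h : s.card = k)
    (a : Fin k) (hm : s.orderEmbOfFin h a ∈ s) :
    (s.orderIsoOfFin h).symm ⟨s.orderEmbOfFin h a, hm⟩ = a := by
  have : (⟨s.orderEmbOfFin h a, hm⟩ : {x // x ∈ s}) = s.orderIsoOfFin h a :=
    Subtype.ext (s.coe_orderIsoOfFin_apply h a).symm
  rw [this, OrderIso.symm_apply_apply]

noncomputable def up (N : Fin A.card → Fin B.card → Bool) : Fin r → Fin s → Bool :=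
  fun i j => if h : i ∈ A ∧ j ∈ B then
    N ((A.orderIsoOfFin rfl).symm ⟨i, h.1⟩) ((B.orderIsoOfFin rfl).symm ⟨j, h.2⟩) else false

lemma up_apply_coe (N : Fin A.card → Fin B.card → Bool) (a : Fin A.card) (b : Fin B.card) :
    up A B N (A.orderIsoOfFin rfl a) (B.orderIsoOfFin rfl b) = N a b := by
  rw [up, dif_pos ⟨(A.orderIsoOfFin rfl a).2, (B.orderIsoOfFin rfl b).2⟩]
  congr 1
  · exact oiSymm A rfl a _
  · exact oiSymm B rfl b _

lemma up_eq_false (N : Fin A.card → Fin B.card → Bool) {i : Fin r} {j : Fin s}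
    (h : ¬(i ∈ A ∧ j ∈ B)) : up A B N i j = false := dif_neg h

lemma filter_up (N : Fin A.card → Fin B.card → Bool) :
    (Finset.univ.filter fun x : Fin r × Fin s => up A B N x.1 x.2 = true) =
      (Finset.univ.filter fun y : Fin A.card × Fin B.card => N y.1 y.2 = true).image
        (fun y => ((A.orderIsoOfFin rfl y.1 : Fin r), (B.orderIsoOfFin rfl y.2 : Fin s))) := by
  ext ⟨i, j⟩
  simp only [mem_filter, mem_univ, true_and, mem_image, Prod.mk.injEq, Prod.exists]
  constructor
  · intro hij
    by_cases h : i ∈ A ∧ j ∈ B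
    · refine ⟨(A.orderIsoOfFin rfl).symm ⟨i, h.1⟩, (B.orderIsoOfFin rfl).symm ⟨j, h.2⟩, ?_, ?_, ?_⟩
      · rwa [up, dif_pos h] at hij
      · simp
      · simp
    · rw [up_eq_false A B N h] at hij; exact absurd hij (by simp)
  · rintro ⟨a, b, hN, rfl, rfl⟩
    rw [up_apply_coe]; exact hN

lemma ones_up (N : Fin A.card → Fin B.card → Bool) : ones (up A B N) = ones N := by
  rw [ones, ones, filter_up, Finset.card_image_of_injective]
  intro ⟨a, b⟩ ⟨a', b'⟩ h
  simp only [Prod.mk.injEq] at h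
  have h1 : A.orderIsoOfFin rfl a = A.orderIsoOfFin rfl a' := Subtype.ext h.1
  have h2 : B.orderIsoOfFin rfl b = B.orderIsoOfFin rfl b' := Subtype.ext h.2
  exact Prod.ext ((A.orderIsoOfFin rfl).injective h1) ((B.orderIsoOfFin rfl).injective h2)

lemma rows_up (N : Fin A.card → Fin B.card → Bool)
    (hN : (∀ a, ∃ b, N a b = true)) : rows (up A B N) = A := by
  ext i
  simp only [rows, mem_filter, mem_univ, true_and]
  constructor
  · rintro ⟨j, hj⟩
    by_contra hi
    rw [up_eq_false A B N (fun h => hi h.1)] at hj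
    exact absurd hj (by simp)
  · intro hi
    obtain ⟨b, hb⟩ := hN ((A.orderIsoOfFin rfl).symm ⟨i, hi⟩)
    refine ⟨B.orderIsoOfFin rfl b, ?_⟩
    rw [up, dif_pos ⟨hi, (B.orderIsoOfFin rfl b).2⟩]
    convert hb
    exact oiSymm B rfl b _

lemma cols_up (N : Fin A.card → Fin B.card → Bool)
    (hN : (∀ b, ∃ a, N a b = true)) : cols (up A B N) = B := by
  ext j
  simp only [cols, mem_filter, mem_univ, true_and]
  constructor
  · rintro ⟨i, hi⟩
    by_contra hj
    rw [up_eq_false A B N (fun h => hj h.2)] at hi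
    exact absurd hi (by simp)
  · intro hj
    obtain ⟨a, ha⟩ := hN ((B.orderIsoOfFin rfl).symm ⟨j, hj⟩)
    refine ⟨A.orderIsoOfFin rfl a, ?_⟩
    rw [up, dif_pos ⟨(A.orderIsoOfFin rfl a).2, hj⟩]
    convert ha
    exact oiSymm A rfl a _

lemma down_up (N : Fin A.card → Fin B.card → Bool) :
    (fun a b => up A B N (A.orderIsoOfFin rfl a) (B.orderIsoOfFin rfl b)) = N := by
  funext a b; exact up_apply_coe A B N a b

lemma up_down (M : Fin r → Fin s → Bool) (hr : rows M = A) (hc : cols M = B) :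
    up A B (fun a b => M (A.orderIsoOfFin rfl a) (B.orderIsoOfFin rfl b)) = M := by
  funext i j
  by_cases h : i ∈ A ∧ j ∈ B
  · rw [up, dif_pos h]
    congr 1 <;> simp
  · rw [up_eq_false A B _ h]
    by_contra hM
    have hM' : M i j = true := by
      cases hMij : M i j
      · exact absurd (hMij ▸ rfl) hM
      · rfl
    exact h ⟨hr ▸ (by simp only [rows, mem_filter, mem_univ, true_and]; exact ⟨j, hM'⟩),
      hc ▸ (by simp only [cols, mem_filter, mem_univ, true_and]; exact ⟨i, hM'⟩)⟩

end Fiber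

noncomputable def fiberEquiv {r s : ℕ} (n : ℕ) (A : Finset (Fin r)) (B : Finset (Fin s)) :
    {M : Fin r → Fin s → Bool // ones M = n ∧ rows M = A ∧ cols M = B} ≃
      {N : Fin A.card → Fin B.card → Bool // Pred n N} where
  toFun := fun ⟨M, hM⟩ =>
    ⟨fun a b => M (A.orderIsoOfFin rfl a) (B.orderIsoOfFin rfl b), by
      have hup := up_down A B M hM.2.1 hM.2.2
      refine ⟨?_, ?_, ?_⟩
      · have := ones_up A B (fun a b => M (A.orderIsoOfFin rfl a) (B.orderIsoOfFin rfl b))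
        rw [hup] at this
        rw [show (Finset.univ.filter fun x : Fin A.card × Fin B.card =>
          M (A.orderIsoOfFin rfl x.1) (B.orderIsoOfFin rfl x.2) = true).card =
          ones (fun a b => M (A.orderIsoOfFin rfl a) (B.orderIsoOfFin rfl b)) from rfl,
          ← this, hM.1]
      · intro a
        have hi : (A.orderIsoOfFin rfl a : Fin r) ∈ rows M := hM.2.1 ▸ (A.orderIsoOfFin rfl a).2
        simp only [rows, mem_filter] at hi
        obtain ⟨j, hj⟩ := hi.2
        have hjB : j ∈ B := hM.2.2 ▸ (by simp only [cols, mem_filter, mem_univ, true_and]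
                                         exact ⟨_, hj⟩)
        refine ⟨(B.orderIsoOfFin rfl).symm ⟨j, hjB⟩, ?_⟩
        simp only [OrderIso.apply_symm_apply]
        exact hj
      · intro b
        have hj : (B.orderIsoOfFin rfl b : Fin s) ∈ cols M := hM.2.2 ▸ (B.orderIsoOfFin rfl b).2
        simp only [cols, mem_filter] at hj
        obtain ⟨i, hi⟩ := hj.2
        have hiA : i ∈ A := hM.2.1 ▸ (by simp only [rows, mem_filter, mem_univ, true_and]
                                         exact ⟨_, hi⟩)
        refine ⟨(A.orderIsoOfFin rfl).symm ⟨i, hiA⟩, ?_⟩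
        simp only [OrderIso.apply_symm_apply]
        exact hi⟩
  invFun := fun ⟨N, hN⟩ =>
    ⟨up A B N, by
      refine ⟨?_, rows_up A B N hN.2.1, cols_up A B N hN.2.2⟩
      rw [ones_up A B N]
      exact hN.1⟩
  left_inv := fun ⟨M, hM⟩ => Subtype.ext (up_down A B M hM.2.1 hM.2.2)
  right_inv := fun ⟨N, hN⟩ => Subtype.ext (down_up A B N)

lemma card_fiber {r s : ℕ} (n : ℕ) (A : Finset (Fin r)) (B : Finset (Fin s)) :
    Fintype.card {M : Fin r → Fin s → Bool // ones M = n ∧ rows M = A ∧ cols M = B} =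
      a n A.card B.card :=
  Fintype.card_congr (fiberEquiv n A B)

lemma card_ones_partition (n r s : ℕ) :
    Fintype.card {M : Fin r → Fin s → Bool // ones M = n} =
      ∑ AB : Finset (Fin r) × Finset (Fin s), a n AB.1.card AB.2.card := by
  calc Fintype.card {M : Fin r → Fin s → Bool // ones M = n}
      = Fintype.card (Σ AB : Finset (Fin r) × Finset (Fin s),
          {x : {M : Fin r → Fin s → Bool // ones M = n} // (rows x.1, cols x.1) = AB}) :=
        (Fintype.card_congr (Equiv.sigmaFiberEquiv _)).symm
    _ = ∑ AB : Finset (Fin r) × Finset (Fin s),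
          Fintype.card {x : {M : Fin r → Fin s → Bool // ones M = n} //
            (rows x.1, cols x.1) = AB} := Fintype.card_sigma
    _ = ∑ AB : Finset (Fin r) × Finset (Fin s), a n AB.1.card AB.2.card := by
        refine Fintype.sum_congr _ _ fun AB => ?_
        rw [← card_fiber n AB.1 AB.2]
        refine Fintype.card_congr
          (((Equiv.subtypeSubtypeEquivSubtypeInter
            (fun M : Fin r → Fin s → Bool => ones M = n)
            (fun M => (rows M, cols M) = AB)).trans (Equiv.subtypeEquivRight ?_)))
        intro M
        simp only [Prod.mk.injEq, Prod.ext_iff, and_assoc]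

lemma card_ones_choose (n r s : ℕ) :
    Fintype.card {M : Fin r → Fin s → Bool // ones M = n} = (r * s).choose n := by
  rw [show Fintype.card {M : Fin r → Fin s → Bool // ones M = n} =
      Fintype.card {X : Finset (Fin r × Fin s) // X.card = n} from
    Fintype.card_congr (Equiv.subtypeEquiv
      { toFun := fun M => Finset.univ.filter fun x : Fin r × Fin s => M x.1 x.2 = true
        invFun := fun X => fun i j => decide ((i, j) ∈ X)
        left_inv := fun M => by funext i j; simp
        right_inv := fun X => by ext ⟨i, j⟩; simp }
      fun M => Iff.rfl)]
  rw [Fintype.card_finset_len, Fintype.card_prod, Fintype.card_fin, Fintype.card_fin]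

lemma sum_range_swap {h : ℕ → ℕ} {u v : ℕ} (hu : ∀ k, u < k → h k = 0)
    (hv : ∀ k, v < k → h k = 0) :
    ∑ k ∈ range (u + 1), h k = ∑ k ∈ range (v + 1), h k := by
  have H : ∀ w u : ℕ, u ≤ w → (∀ k, u < k → h k = 0) →
      ∑ k ∈ range (u + 1), h k = ∑ k ∈ range (w + 1), h k := by
    intro w u huw hu
    refine Finset.sum_subset (Finset.range_subset_range.2 (by omega)) ?_
    intro k _ hk
    rw [mem_range] at hk
    exact hu k (by omega)
  rw [H (max u v) u (le_max_left _ _) hu, H (max u v) v (le_max_right _ _) hv]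

lemma sum_finset_card {α : Type*} [Fintype α] (g : ℕ → ℕ) :
    ∑ A : Finset α, g A.card
      = ∑ p ∈ range (Fintype.card α + 1), (Fintype.card α).choose p * g p := by
  classical
  have := Finset.sum_powerset_apply_card g (x := (univ : Finset α))
  rw [Finset.powerset_univ, Finset.card_univ] at this
  simpa [smul_eq_mul] using this

lemma keyA (n r s : ℕ) :
    (r * s).choose n =
      ∑ p ∈ range (n + 1), ∑ q ∈ range (n + 1), r.choose p * (s.choose q * a n p q) := by
  have base : (r * s).choose n =
      ∑ p ∈ range (r + 1), r.choose p * ∑ q ∈ range (s + 1), s.choose q * a n p q := by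
    rw [← card_ones_choose n r s, card_ones_partition, Fintype.sum_prod_type]
    have step1 : ∀ A : Finset (Fin r), (∑ B : Finset (Fin s), a n A.card B.card) =
        ∑ q ∈ range (s + 1), s.choose q * a n A.card q := by
      intro A
      have := sum_finset_card (α := Fin s) (fun m => a n A.card m)
      rwa [Fintype.card_fin] at this
    rw [Fintype.sum_congr _ _ step1]
    have := sum_finset_card (α := Fin r) (fun p => ∑ q ∈ range (s + 1), s.choose q * a n p q)
    rwa [Fintype.card_fin] at this
  rw [base]
  have inner : ∀ p, ∑ q ∈ range (s + 1), s.choose q * a n p q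
      = ∑ q ∈ range (n + 1), s.choose q * a n p q := by
    intro p
    refine sum_range_swap (fun k hk => ?_) (fun k hk => ?_)
    · rw [Nat.choose_eq_zero_of_lt hk, zero_mul]
    · rw [a_eq_zero_right hk, mul_zero]
  simp_rw [inner]
  rw [show (∑ p ∈ range (n + 1), ∑ q ∈ range (n + 1), r.choose p * (s.choose q * a n p q)) =
      ∑ p ∈ range (n + 1), r.choose p * ∑ q ∈ range (n + 1), s.choose q * a n p q from
    Finset.sum_congr rfl fun p _ => by rw [Finset.mul_sum]]
  refine sum_range_swap (fun k hk => ?_) (fun k hk => ?_)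
  · rw [Nat.choose_eq_zero_of_lt hk, zero_mul]
  · rw [Finset.sum_eq_zero fun q _ => by rw [a_eq_zero_left hk, mul_zero], mul_zero]

lemma summable_choose (p : ℕ) : Summable (fun r : ℕ => (r.choose p : ℝ) / 2 ^ r) := by
  have h := summable_pow_mul_geometric_of_norm_lt_one (R := ℝ) p
    (r := 1/2) (by rw [Real.norm_eq_abs, abs_of_pos] <;> norm_num)
  refine h.of_nonneg_of_le (fun r => by positivity) (fun r => ?_)
  have h1 : (r.choose p : ℝ) ≤ (r : ℝ) ^ p := by
    calc (r.choose p : ℝ) ≤ (r ^ p : ℝ) / p.factorial := Nat.choose_le_pow_div p r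
    _ ≤ (r:ℝ)^p := by
        rw [div_le_iff₀ (by positivity)]
        exact le_mul_of_one_le_right (by positivity) (Nat.one_le_cast.2 p.factorial_pos)
  calc (r.choose p : ℝ) / 2 ^ r ≤ (r:ℝ)^p / 2^r := by gcongr
    _ = (r:ℝ)^p * (1/2)^r := by rw [div_pow, one_pow]; ring

lemma tsum_choose (p : ℕ) : ∑' r : ℕ, (r.choose p : ℝ) / 2 ^ r = 2 := by
  induction p with
  | zero =>
    simp only [Nat.choose_zero_right, Nat.cast_one]
    rw [show (fun r : ℕ => (1:ℝ) / 2 ^ r) = fun r : ℕ => (1/2 : ℝ) ^ r by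
      funext r; rw [div_pow, one_pow]]
    rw [tsum_geometric_of_lt_one (by norm_num) (by norm_num)]
    norm_num
  | succ p ih =>
    have hs := summable_choose (p + 1)
    have hsp := summable_choose p
    have key : ∑' r : ℕ, ((r + 1).choose (p + 1) : ℝ) / 2 ^ (r + 1)
        = (1/2) * (∑' r : ℕ, (r.choose p : ℝ) / 2 ^ r)
          + (1/2) * (∑' r : ℕ, (r.choose (p+1) : ℝ) / 2 ^ r) := by
      rw [← tsum_mul_left, ← tsum_mul_left, ← Summable.tsum_add (hsp.mul_left (1/2)) (hs.mul_left (1/2))]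
      congr 1
      funext r
      rw [Nat.choose_succ_succ']
      push_cast
      ring
    have h0 : ∑' r : ℕ, (r.choose (p + 1) : ℝ) / 2 ^ r
        = ((0 : ℕ).choose (p+1) : ℝ) / 2 ^ (0:ℕ)
          + ∑' r : ℕ, ((r + 1).choose (p + 1) : ℝ) / 2 ^ (r + 1) := by
      exact (Summable.tsum_eq_zero_add hs)
    rw [key, ih] at h0
    simp only [Nat.choose_eq_zero_of_lt (by omega : 0 < p + 1), Nat.cast_zero] at h0
    norm_num at h0
    linarith [h0]

lemma tsum_prod_mul (f g : ℕ → ℝ) (hf : Summable f) (hg : Summable g)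
    (hf0 : ∀ x, 0 ≤ f x) (hg0 : ∀ x, 0 ≤ g x) :
    ∑' rs : ℕ × ℕ, f rs.1 * g rs.2 = (∑' r, f r) * (∑' s, g s) := by
  rw [Summable.tsum_prod' (hf.mul_of_nonneg hg hf0 hg0) (fun b => hg.mul_left (f b))]
  calc ∑' (b : ℕ) (c : ℕ), f b * g c = ∑' (b : ℕ), f b * ∑' c, g c := by
        refine tsum_congr fun b => ?_
        exact tsum_mul_left
    _ = (∑' r, f r) * (∑' s, g s) := tsum_mul_right

noncomputable def term (n p q : ℕ) : ℕ × ℕ → ℝ := fun rs =>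
  (a n p q : ℝ) * ((rs.1.choose p : ℝ) / 2 ^ rs.1 * ((rs.2.choose q : ℝ) / 2 ^ rs.2))

lemma summable_term (n p q : ℕ) : Summable (term n p q) :=
  (((summable_choose p).mul_of_nonneg (summable_choose q)
    (fun x => by positivity) (fun x => by positivity))).mul_left _

lemma tsum_term (n p q : ℕ) : ∑' rs : ℕ × ℕ, term n p q rs = 4 * a n p q := by
  simp only [term]
  rw [tsum_mul_left, tsum_prod_mul _ _ (summable_choose p) (summable_choose q)
    (fun x => by positivity) (fun x => by positivity), tsum_choose, tsum_choose]
  ring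

lemma pointwise (n : ℕ) (rs : ℕ × ℕ) :
    ((rs.1 * rs.2).choose n : ℝ) / 2 ^ (rs.1 + rs.2) =
      ∑ pq ∈ range (n + 1) ×ˢ range (n + 1), term n pq.1 pq.2 rs := by
  rw [Finset.sum_product]
  rw [keyA n rs.1 rs.2]
  push_cast
  rw [Finset.sum_div]
  refine Finset.sum_congr rfl fun p _ => ?_
  rw [Finset.sum_div]
  refine Finset.sum_congr rfl fun q _ => ?_
  rw [term, pow_add]
  have h1 : (2:ℝ) ^ rs.1 ≠ 0 := by positivity
  have h2 : (2:ℝ) ^ rs.2 ≠ 0 := by positivity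
  field_simp

lemma summable_F (n : ℕ) :
    Summable (fun rs : ℕ × ℕ => ((rs.1 * rs.2).choose n : ℝ) / 2 ^ (rs.1 + rs.2)) := by
  rw [show (fun rs : ℕ × ℕ => ((rs.1 * rs.2).choose n : ℝ) / 2 ^ (rs.1 + rs.2)) =
      fun rs => ∑ pq ∈ range (n + 1) ×ˢ range (n + 1), term n pq.1 pq.2 rs from
    funext fun rs => pointwise n rs]
  exact summable_sum fun pq _ => summable_term n pq.1 pq.2

lemma tsum_F (n : ℕ) :
    ∑' rs : ℕ × ℕ, ((rs.1 * rs.2).choose n : ℝ) / 2 ^ (rs.1 + rs.2) =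
      4 * ∑ pq ∈ range (n + 1) ×ˢ range (n + 1), (a n pq.1 pq.2 : ℝ) := by
  rw [tsum_congr (pointwise n),
    Summable.tsum_finsetSum (s := range (n + 1) ×ˢ range (n + 1))
      (f := fun pq : ℕ × ℕ => term n pq.1 pq.2)
      (fun pq _ => summable_term n pq.1 pq.2)]
  rw [Finset.mul_sum]
  exact Finset.sum_congr rfl fun pq _ => tsum_term n pq.1 pq.2

lemma pred_row_le {n p q : ℕ} {M : Fin p → Fin q → Bool} (h : Pred n M) : p ≤ n := by
  obtain ⟨hM, hr, -⟩ := h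
  have : (univ : Finset (Fin p)).card ≤
      (Finset.univ.filter fun x : Fin p × Fin q => M x.1 x.2 = true).card := by
    apply Finset.card_le_card_of_injOn (fun i => (i, (hr i).choose))
    · intro i _; simp [(hr i).choose_spec]
    · intro i _ i' _ hii'; exact congrArg Prod.fst hii'
  simp only [card_univ, Fintype.card_fin, hM] at this
  omega

lemma pred_col_le {n p q : ℕ} {M : Fin p → Fin q → Bool} (h : Pred n M) : q ≤ n := by
  obtain ⟨hM, -, hc⟩ := h
  have : (univ : Finset (Fin q)).card ≤
      (Finset.univ.filter fun x : Fin p × Fin q => M x.1 x.2 = true).card := by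
    apply Finset.card_le_card_of_injOn (fun j => ((hc j).choose, j))
    · intro j _; simp [(hc j).choose_spec]
    · intro j _ j' _ hjj'; exact congrArg Prod.snd hjj'
  simp only [card_univ, Fintype.card_fin, hM] at this
  omega

noncomputable def bigEquiv (n : ℕ) :
    (Σ p : ℕ+, Σ q : ℕ+, {M : Fin p → Fin q → Bool // Pred n M}) ≃
      (Σ pq : ↥(Finset.Icc 1 n ×ˢ Finset.Icc 1 n),
        {M : Fin (pq : ℕ × ℕ).1 → Fin (pq : ℕ × ℕ).2 → Bool // Pred n M}) where
  toFun := fun x => ⟨⟨((x.1 : ℕ), (x.2.1 : ℕ)), by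
      rw [Finset.mem_product, Finset.mem_Icc, Finset.mem_Icc]
      exact ⟨⟨x.1.one_le, pred_row_le x.2.2.2⟩, ⟨x.2.1.one_le, pred_col_le x.2.2.2⟩⟩⟩, x.2.2⟩
  invFun := fun y =>
    ⟨⟨(y.1 : ℕ × ℕ).1, by
        have := (Finset.mem_product.1 y.1.2).1
        exact (Finset.mem_Icc.1 this).1⟩,
     ⟨(y.1 : ℕ × ℕ).2, by
        have := (Finset.mem_product.1 y.1.2).2
        exact (Finset.mem_Icc.1 this).1⟩, y.2⟩
  left_inv := fun ⟨p, q, M⟩ => rfl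
  right_inv := fun ⟨⟨⟨p, q⟩, h⟩, M⟩ => rfl

lemma card_big_nat (n : ℕ) (hn : 1 ≤ n) :
    Nat.card (Σ p : ℕ+, Σ q : ℕ+, {M : Fin p → Fin q → Bool // Pred n M}) =
      ∑ pq ∈ range (n + 1) ×ˢ range (n + 1), a n pq.1 pq.2 := by
  rw [Nat.card_congr (bigEquiv n), Nat.card_eq_fintype_card, Fintype.card_sigma]
  have h1 : ∑ i : ↥(Finset.Icc 1 n ×ˢ Finset.Icc 1 n),
      Fintype.card {M : Fin ((i : ℕ × ℕ)).1 → Fin ((i : ℕ × ℕ)).2 → Bool // Pred n M} =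
      ∑ pq ∈ Finset.Icc 1 n ×ˢ Finset.Icc 1 n, a n pq.1 pq.2 := by
    rw [← Finset.sum_coe_sort (Finset.Icc 1 n ×ˢ Finset.Icc 1 n)
      (fun pq => a n pq.1 pq.2)]
    refine Finset.sum_congr rfl fun i _ => ?_
    rw [a]
  rw [h1]
  refine Finset.sum_subset ?_ ?_
  · refine Finset.product_subset_product ?_ ?_ <;>
      · intro k hk
        rw [Finset.mem_Icc] at hk
        rw [Finset.mem_range]
        omega
  · intro pq hpq hpq'
    rw [Finset.mem_product, Finset.mem_range, Finset.mem_range] at hpq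
    rw [Finset.mem_product, Finset.mem_Icc, Finset.mem_Icc] at hpq'
    rcases Decidable.not_and_iff_or_not.1 hpq' with h | h
    · exact a_pos_left hn (by omega)
    · exact a_pos_right hn (by omega)

end ZOM

/-- For `n ≥ 1`, the total number of `(0,1)`-matrices of any size `p×q` (`p, q ≥ 1`)
with exactly `n` entries equal to `1`, no zero row and no zero column (a finite
count) equals `(1/(4·n!)) · ∑_{r,s ≥ 0} (r·s)_n / 2^{r+s}`, where `(m)_n` is the
falling factorial, and the double series converges. -/
theorem card_all_zeroOne_matrices (n : ℕ) (hn : 1 ≤ n) :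
    (Nat.card (Σ p : ℕ+, Σ q : ℕ+, {M : Fin p → Fin q → Bool //
        (Finset.univ.filter fun x : Fin p × Fin q => M x.1 x.2 = true).card = n ∧
        (∀ i, ∃ j, M i j = true) ∧ (∀ j, ∃ i, M i j = true)}) : ℝ) =
      (1 / (4 * (n.factorial : ℝ))) *
        ∑' rs : ℕ × ℕ, (((rs.1 * rs.2).descFactorial n : ℝ) / 2 ^ (rs.1 + rs.2)) ∧
    Summable (fun rs : ℕ × ℕ =>
      ((rs.1 * rs.2).descFactorial n : ℝ) / 2 ^ (rs.1 + rs.2)) := by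
  have hdesc : (fun rs : ℕ × ℕ => ((rs.1 * rs.2).descFactorial n : ℝ) / 2 ^ (rs.1 + rs.2)) =
      fun rs : ℕ × ℕ =>
        (n.factorial : ℝ) * (((rs.1 * rs.2).choose n : ℝ) / 2 ^ (rs.1 + rs.2)) := by
    funext rs
    rw [Nat.descFactorial_eq_factorial_mul_choose]
    push_cast
    ring
  constructor
  · rw [show (Nat.card (Σ p : ℕ+, Σ q : ℕ+, {M : Fin p → Fin q → Bool //
        (Finset.univ.filter fun x : Fin p × Fin q => M x.1 x.2 = true).card = n ∧
        (∀ i, ∃ j, M i j = true) ∧ (∀ j, ∃ i, M i j = true)}) : ℝ) =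
      ∑ pq ∈ Finset.range (n + 1) ×ˢ Finset.range (n + 1), (ZOM.a n pq.1 pq.2 : ℝ) by
      rw [ZOM.card_big_nat n hn]; push_cast; rfl]
    rw [hdesc, tsum_mul_left, ZOM.tsum_F n]
    have : (n.factorial : ℝ) ≠ 0 := by positivity
    field_simp
  · rw [hdesc]
    exact (ZOM.summable_F n).mul_left _
end

section
/- For all integers k ≥ 1 and n ≥ 1, the number of k-tuples ((π₁, ℓ₁), …, (π_k, ℓ_k)), where (π₁, …, π_k) are set partitions of an n-element set whose meet is the partition into singletons and each ℓ_i is a linear order on the set of blocks of π_i, equals, as a real number, 2^{−k} · Σ_{i₁, …, i_k ≥ 0} (i₁·i₂⋯i_k)_n / 2^{i₁+⋯+i_k}, where (m)_n = m(m−1)⋯(m−n+1) is the falling factorial and the series converges. -/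
set_option linter.unusedSectionVars false

open Finset Function

section PartLemmas
variable {α : Type*} [DecidableEq α] [Fintype α]

lemma mypart_subset_of_le {s : Finset α} {P Q : Finpartition s} (h : P ≤ Q) {a : α} (ha : a ∈ s) :
    P.part a ⊆ Q.part a := by
  obtain ⟨t, ht, hsub⟩ := h (P.part_mem.2 ha)
  have h2 : Q.part a = t := Q.part_eq_of_mem ht (hsub (P.mem_part ha))
  exact h2 ▸ hsub

lemma mypart_inf (P Q : Finpartition (univ : Finset α)) (a : α) :
    (P ⊓ Q).part a = P.part a ∩ Q.part a := by
  have hmem : P.part a ∩ Q.part a ∈ (P ⊓ Q).parts := by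
    rw [Finpartition.parts_inf]
    refine Finset.mem_erase.2 ⟨?_, Finset.mem_image.2 ⟨(P.part a, Q.part a),
      Finset.mem_product.2 ⟨P.part_mem.2 (mem_univ a), Q.part_mem.2 (mem_univ a)⟩, rfl⟩⟩
    · have hmm : a ∈ P.part a ∩ Q.part a :=
        Finset.mem_inter.2 ⟨P.mem_part (mem_univ a), Q.mem_part (mem_univ a)⟩
      intro h
      rw [h] at hmm
      simp at hmm
  exact (P ⊓ Q).part_eq_of_mem hmem
    (mem_inter.2 ⟨P.mem_part (mem_univ a), Q.mem_part (mem_univ a)⟩)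

lemma myext_part {s : Finset α} {P Q : Finpartition s} (h : ∀ a ∈ s, P.part a = Q.part a) :
    P = Q := by
  ext t
  constructor <;> intro ht
  · obtain ⟨a, ha, rfl⟩ := P.part_surjOn ht
    exact h a ha ▸ Q.part_mem.2 ha
  · obtain ⟨a, ha, rfl⟩ := Q.part_surjOn ht
    exact (h a ha).symm ▸ P.part_mem.2 ha

lemma myeq_bot_iff {P : Finpartition (univ : Finset α)} :
    P = ⊥ ↔ ∀ a b : α, b ∈ P.part a → b = a := by
  constructor
  · rintro rfl a b hb
    have h1 : ({a} : Finset α) ∈ (⊥ : Finpartition (univ : Finset α)).parts :=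
      Finpartition.mem_bot_iff.2 ⟨a, mem_univ a, rfl⟩
    rw [Finpartition.part_eq_of_mem _ h1 (mem_singleton_self a)] at hb
    exact mem_singleton.1 hb
  · intro h
    refine le_bot_iff.1 fun t ht => ?_
    obtain ⟨a, ha⟩ := P.nonempty_of_mem_parts ht
    refine ⟨{a}, Finpartition.mem_bot_iff.2 ⟨a, mem_univ a, rfl⟩, fun b hb => ?_⟩
    rw [mem_singleton]
    exact h a b ((P.part_eq_of_mem ht ha).symm ▸ hb)

end PartLemmas

lemma mem_part_inf_finset {n k : ℕ} (π : Fin k → Finpartition (univ : Finset (Fin n)))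
    {s : Finset (Fin k)} (hs : s.Nonempty) (a b : Fin n) :
    b ∈ (s.inf π).part a ↔ ∀ j ∈ s, b ∈ (π j).part a := by
  induction hs using Finset.Nonempty.cons_induction with
  | singleton j => simp
  | cons j t hjt ht ih =>
    rw [Finset.inf_cons, mypart_inf, mem_inter, ih]
    simp [Finset.mem_cons, or_imp, forall_and]

lemma inf_eq_bot_iff {n k : ℕ} (hk : 1 ≤ k) (π : Fin k → Finpartition (univ : Finset (Fin n))) :
    Finset.univ.inf π = ⊥ ↔ ∀ a b : Fin n, (∀ j, b ∈ (π j).part a) → b = a := by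
  have : Nonempty (Fin k) := ⟨⟨0, hk⟩⟩
  rw [myeq_bot_iff]
  simp only [mem_part_inf_finset π Finset.univ_nonempty, mem_univ, forall_true_left]


open Finset Function

section Defs
variable (n k : ℕ)

/-- Jointly injective tuples of surjections. -/
def JS (m : Fin k → ℕ) : Type :=
  {g : ∀ j, Fin n → Fin (m j) //
    (∀ j, Surjective (g j)) ∧ Injective fun a j => g j a}

/-- Jointly injective tuples of functions. -/
def JI (i : Fin k → ℕ) : Type :=
  {f : ∀ j, Fin n → Fin (i j) // Injective fun a j => f j a}

def XT : Type :=
  {x : Σ π : Fin k → Finpartition (Finset.univ : Finset (Fin n)),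
      ∀ i, {B // B ∈ (π i).parts} ≃ Fin (π i).parts.card //
    Finset.univ.inf x.1 = ⊥}

instance (m : Fin k → ℕ) : Finite (JS n k m) := by unfold JS; infer_instance
instance (i : Fin k → ℕ) : Finite (JI n k i) := by unfold JI; infer_instance
instance : Finite (XT n k) := by unfold XT; infer_instance

end Defs

lemma nat_card_sigma {ι : Type*} [Fintype ι] (f : ι → Type*) [∀ i, Finite (f i)] :
    Nat.card (Σ i, f i) = ∑ i, Nat.card (f i) := by
  classical
  letI inst : ∀ i, Fintype (f i) := fun i => Fintype.ofFinite _
  simp [Nat.card_eq_fintype_card]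

section ToX
variable {n k : ℕ}

def kerSetoid {β : Type*} (f : Fin n → β) : Setoid (Fin n) :=
  ⟨fun a b => f a = f b, ⟨fun _ => rfl, Eq.symm, Eq.trans⟩⟩

instance {β : Type*} [DecidableEq β] (f : Fin n → β) : DecidableRel (kerSetoid f).r :=
  fun a b => inferInstanceAs (Decidable (f a = f b))

def gPart {m : Fin k → ℕ} (g : JS n k m) (j : Fin k) :
    Finpartition (Finset.univ : Finset (Fin n)) :=
  Finpartition.ofSetoid (kerSetoid (g.1 j))

lemma mem_gPart {m : Fin k → ℕ} (g : JS n k m) (j : Fin k) (a b : Fin n) :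
    b ∈ (gPart g j).part a ↔ g.1 j b = g.1 j a := by
  rw [gPart, Finpartition.mem_part_ofSetoid_iff_rel]
  exact ⟨Eq.symm, Eq.symm⟩

def gVal {m : Fin k → ℕ} (g : JS n k m) (j : Fin k)
    (B : {B // B ∈ (gPart g j).parts}) : Fin (m j) :=
  g.1 j (B.1.min' ((gPart g j).nonempty_of_mem_parts B.2))

lemma gVal_spec {m : Fin k → ℕ} (g : JS n k m) (j : Fin k)
    (B : {B // B ∈ (gPart g j).parts}) {a : Fin n} (ha : a ∈ B.1) :
    gVal g j B = g.1 j a := by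
  have hm := B.1.min'_mem ((gPart g j).nonempty_of_mem_parts B.2)
  have hB : (gPart g j).part a = B.1 := (gPart g j).part_eq_of_mem B.2 ha
  exact (mem_gPart g j a _).1 (by rw [hB]; exact hm)

lemma gVal_bij {m : Fin k → ℕ} (g : JS n k m) (j : Fin k) : Bijective (gVal g j) := by
  constructor
  · rintro ⟨B, hB⟩ ⟨B', hB'⟩ h
    obtain ⟨a, ha⟩ := (gPart g j).nonempty_of_mem_parts hB
    obtain ⟨a', ha'⟩ := (gPart g j).nonempty_of_mem_parts hB'
    rw [gVal_spec _ _ _ ha, gVal_spec _ _ _ ha'] at h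
    have e1 : (gPart g j).part a = B := (gPart g j).part_eq_of_mem hB ha
    have e2 : (gPart g j).part a' = B' := (gPart g j).part_eq_of_mem hB' ha'
    have h3 : a' ∈ (gPart g j).part a := (mem_gPart g j a a').2 h.symm
    have e3 : (gPart g j).part a' = (gPart g j).part a :=
      (gPart g j).part_eq_of_mem ((gPart g j).part_mem.2 (Finset.mem_univ a)) h3
    exact Subtype.ext (show B = B' by rw [← e1, ← e2, e3])
  · intro w
    obtain ⟨a, ha⟩ := g.2.1 j w
    exact ⟨⟨(gPart g j).part a, (gPart g j).part_mem.2 (Finset.mem_univ a)⟩,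
      by rw [gVal_spec _ _ _ ((gPart g j).mem_part (Finset.mem_univ a))]; exact ha⟩

lemma gCard {m : Fin k → ℕ} (g : JS n k m) (j : Fin k) :
    (gPart g j).parts.card = m j := by
  have := Fintype.card_of_bijective (gVal_bij g j)
  simpa using this

noncomputable def toX (hk : 1 ≤ k) (p : Σ m : Fin k → Fin (n + 1), JS n k fun j => (m j : ℕ)) :
    XT n k :=
  ⟨⟨fun j => gPart p.2 j, fun j =>
      (Equiv.ofBijective _ (gVal_bij p.2 j)).trans (finCongr (gCard p.2 j).symm)⟩, by
    rw [inf_eq_bot_iff hk]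
    intro a b hab
    exact (p.2.2.2 (funext fun j => (mem_gPart p.2 j a b).1 (hab j))).symm ▸ rfl⟩

def CX (x : XT n k) (j : Fin k) : ℕ := (x.1.1 j).parts.card

def WX (x : XT n k) (j : Fin k) (a : Fin n) : ℕ :=
  (x.1.2 j ⟨(x.1.1 j).part a, (x.1.1 j).part_mem.2 (Finset.mem_univ a)⟩ : ℕ)

lemma CX_toX (hk : 1 ≤ k) (p : Σ m : Fin k → Fin (n + 1), JS n k fun j => (m j : ℕ))
    (j : Fin k) : CX (toX hk p) j = p.1 j := gCard p.2 j

lemma WX_toX (hk : 1 ≤ k) (p : Σ m : Fin k → Fin (n + 1), JS n k fun j => (m j : ℕ))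
    (j : Fin k) (a : Fin n) : WX (toX hk p) j a = (p.2.1 j a : ℕ) := by
  show ((finCongr (gCard p.2 j).symm (gVal p.2 j ⟨(gPart p.2 j).part a, _⟩)) : ℕ) = _
  rw [finCongr_apply, Fin.coe_cast,
    gVal_spec p.2 j _ ((gPart p.2 j).mem_part (Finset.mem_univ a))]

end ToX

section Bij
variable {n k : ℕ}

lemma XT_sigma_ext {π π' : Fin k → Finpartition (Finset.univ : Finset (Fin n))}
    {ℓ : ∀ j, {B // B ∈ (π j).parts} ≃ Fin (π j).parts.card}
    {ℓ' : ∀ j, {B // B ∈ (π' j).parts} ≃ Fin (π' j).parts.card}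
    (hpart : ∀ j a, (π j).part a = (π' j).part a)
    (hval : ∀ j a, ((ℓ j ⟨(π j).part a, (π j).part_mem.2 (Finset.mem_univ a)⟩ : Fin _) : ℕ)
        = ((ℓ' j ⟨(π' j).part a, (π' j).part_mem.2 (Finset.mem_univ a)⟩ : Fin _) : ℕ)) :
    (⟨π, ℓ⟩ : Σ π : Fin k → Finpartition (Finset.univ : Finset (Fin n)),
        ∀ j, {B // B ∈ (π j).parts} ≃ Fin (π j).parts.card) = ⟨π', ℓ'⟩ := by
  have hπ : π = π' := funext fun j => myext_part fun a _ => hpart j a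
  subst hπ
  have hℓ : ℓ = ℓ' := by
    funext j
    apply Equiv.ext
    rintro ⟨t, ht⟩
    obtain ⟨a, ha, rfl⟩ := (π j).part_surjOn ht
    exact Fin.ext (hval j a)
  rw [hℓ]

lemma toX_bij (hk : 1 ≤ k) : Bijective (toX (n := n) hk) := by
  constructor
  · rintro ⟨m, g⟩ ⟨m', g'⟩ h
    have hm : m = m' := by
      funext j
      apply Fin.ext
      rw [← CX_toX hk ⟨m, g⟩ j, ← CX_toX hk ⟨m', g'⟩ j, h]
    subst hm
    have hg : g = g' := by
      apply Subtype.ext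
      funext j a
      apply Fin.ext
      rw [← WX_toX hk ⟨m, g⟩ j a, ← WX_toX hk ⟨m, g'⟩ j a, h]
    rw [hg]
  · rintro ⟨⟨π, ℓ⟩, hmeet⟩
    have hpm : ∀ j (a : Fin n), (π j).part a ∈ (π j).parts :=
      fun j a => (π j).part_mem.2 (Finset.mem_univ a)
    refine ⟨⟨fun j => ⟨(π j).parts.card,
        Nat.lt_succ_of_le ((π j).card_parts_le_card.trans (by simp))⟩,
      ⟨fun j a => ℓ j ⟨(π j).part a, hpm j a⟩, ?_, ?_⟩⟩, ?_⟩
    · -- surjectivity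
      intro j w
      obtain ⟨a, ha⟩ := (π j).nonempty_of_mem_parts ((ℓ j).symm w).2
      refine ⟨a, ?_⟩
      have h1 : (π j).part a = ((ℓ j).symm w).1 :=
        (π j).part_eq_of_mem ((ℓ j).symm w).2 ha
      calc ℓ j ⟨(π j).part a, hpm j a⟩ = ℓ j ((ℓ j).symm w) := by
            congr 1; exact Subtype.ext h1
        _ = w := (ℓ j).apply_symm_apply w
    · -- joint injectivity
      intro a b hab
      have hparts : ∀ j, (π j).part a = (π j).part b := by
        intro j
        have := congrFun hab j
        simpa [Subtype.ext_iff] using (ℓ j).injective this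
      rw [inf_eq_bot_iff hk] at hmeet
      exact (hmeet b a fun j =>
        ((π j).mem_part_iff_part_eq_part (Finset.mem_univ a) (Finset.mem_univ b)).2
          (hparts j)).symm ▸ rfl
    · -- equality
      apply Subtype.ext
      apply XT_sigma_ext
      case hpart =>
        intro j a
        ext b
        rw [mem_gPart]
        show (ℓ j ⟨(π j).part b, hpm j b⟩ = ℓ j ⟨(π j).part a, hpm j a⟩) ↔ _
        rw [(ℓ j).apply_eq_iff_eq, Subtype.ext_iff]
        exact ⟨fun h => ((π j).mem_part_iff_part_eq_part (Finset.mem_univ b)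
            (Finset.mem_univ a)).2 h,
          fun h => ((π j).mem_part_iff_part_eq_part (Finset.mem_univ b)
            (Finset.mem_univ a)).1 h⟩
      case hval =>
        intro j a
        exact WX_toX hk _ j a

lemma card_XT (hk : 1 ≤ k) :
    Nat.card (XT n k) =
      ∑ m : Fin k → Fin (n + 1), Nat.card (JS n k fun j => (m j : ℕ)) := by
  rw [← Nat.card_eq_of_bijective _ (toX_bij (n := n) hk), nat_card_sigma]

end Bij

section JIcount
variable {n k : ℕ}

lemma card_JI_descFactorial (i : Fin k → ℕ) :
    Nat.card (JI n k i) = (∏ j, i j).descFactorial n := by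
  have e : JI n k i ≃ (Fin n ↪ ∀ j, Fin (i j)) :=
    { toFun := fun f => ⟨fun a j => f.1 j a, f.2⟩
      invFun := fun F => ⟨fun j a => F a j, fun a b h => F.injective h⟩
      left_inv := fun f => rfl
      right_inv := fun F => rfl }
  rw [Nat.card_congr e, Nat.card_eq_fintype_card, Fintype.card_embedding_eq]
  simp

def TS (n k : ℕ) (i : Fin k → ℕ) : Type :=
  Σ m : Fin k → Fin (n + 1),
    JS n k (fun j => (m j : ℕ)) × ∀ j, {s : Finset (Fin (i j)) // s.card = (m j : ℕ)}

instance (i : Fin k → ℕ) : Finite (TS n k i) := by unfold TS; infer_instance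

def psi (i : Fin k → ℕ) (p : TS n k i) : JI n k i :=
  ⟨fun j a => ((p.2.2 j).1.orderIsoOfFin (p.2.2 j).2 (p.2.1.1 j a) : Fin (i j)), by
    intro a b h
    apply p.2.1.2.2
    funext j
    exact ((p.2.2 j).1.orderIsoOfFin (p.2.2 j).2).injective
      (Subtype.ext (congrFun h j))⟩

lemma psi_image (i : Fin k → ℕ) (p : TS n k i) (j : Fin k) :
    Finset.univ.image (fun a => ((psi i p).1 j a)) = (p.2.2 j).1 := by
  ext x
  simp only [Finset.mem_image, Finset.mem_univ, true_and]
  constructor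
  · rintro ⟨a, rfl⟩
    exact (((p.2.2 j).1.orderIsoOfFin (p.2.2 j).2) (p.2.1.1 j a)).2
  · intro hx
    obtain ⟨a, ha⟩ := p.2.1.2.1 j (((p.2.2 j).1.orderIsoOfFin (p.2.2 j).2).symm ⟨x, hx⟩)
    refine ⟨a, ?_⟩
    show (((p.2.2 j).1.orderIsoOfFin (p.2.2 j).2) (p.2.1.1 j a) : Fin (i j)) = x
    rw [ha, OrderIso.apply_symm_apply]

lemma psi_bij (i : Fin k → ℕ) : Bijective (psi (n := n) i) := by
  constructor
  · rintro ⟨m, g, S⟩ ⟨m', g', S'⟩ h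
    have hv : ∀ j a, (psi i ⟨m, g, S⟩).1 j a = (psi i ⟨m', g', S'⟩).1 j a := by
      intro j a; rw [h]
    have hS : ∀ j, (S j).1 = (S' j).1 := by
      intro j
      rw [← psi_image i ⟨m, g, S⟩ j, ← psi_image i ⟨m', g', S'⟩ j]
      exact Finset.image_congr fun a _ => hv j a
    have hm : m = m' := by
      funext j
      exact Fin.ext (by rw [← (S j).2, ← (S' j).2, hS j])
    subst hm
    have hSS : S = S' := funext fun j => Subtype.ext (hS j)
    subst hSS
    have hg : g = g' := by
      apply Subtype.ext
      funext j a
      exact ((S j).1.orderIsoOfFin (S j).2).injective (Subtype.ext (hv j a))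
    rw [hg]
  · intro f
    have hmlt : ∀ j, (Finset.univ.image (f.1 j)).card < n + 1 := fun j =>
      Nat.lt_succ_of_le (Finset.card_image_le.trans (by simp))
    refine ⟨⟨fun j => ⟨(Finset.univ.image (f.1 j)).card, hmlt j⟩,
      ⟨fun j a => ((Finset.univ.image (f.1 j)).orderIsoOfFin rfl).symm
          ⟨f.1 j a, Finset.mem_image_of_mem _ (Finset.mem_univ a)⟩, ?_, ?_⟩,
      fun j => ⟨Finset.univ.image (f.1 j), rfl⟩⟩, ?_⟩
    · -- surjective
      intro j w
      have hmem : (((Finset.univ.image (f.1 j)).orderIsoOfFin rfl) w).1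
          ∈ Finset.univ.image (f.1 j) :=
        (((Finset.univ.image (f.1 j)).orderIsoOfFin rfl) w).2
      obtain ⟨a, -, ha⟩ := Finset.mem_image.1 hmem
      exact ⟨a, (congrArg ((Finset.univ.image (f.1 j)).orderIsoOfFin rfl).symm
        (Subtype.ext ha)).trans (OrderIso.symm_apply_apply _ _)⟩
    · -- joint injectivity
      intro a b hab
      apply f.2
      funext j
      have := congrFun hab j
      have h2 := congrArg ((Finset.univ.image (f.1 j)).orderIsoOfFin rfl) this
      rw [OrderIso.apply_symm_apply, OrderIso.apply_symm_apply] at h2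
      exact congrArg Subtype.val h2
    · -- psi applied equals f
      apply Subtype.ext
      funext j a
      show (((Finset.univ.image (f.1 j)).orderIsoOfFin rfl)
        (((Finset.univ.image (f.1 j)).orderIsoOfFin rfl).symm
          ⟨f.1 j a, _⟩) : Fin (i j)) = f.1 j a
      rw [OrderIso.apply_symm_apply]

lemma descFactorial_eq (i : Fin k → ℕ) :
    (∏ j, i j).descFactorial n =
      ∑ m : Fin k → Fin (n + 1),
        Nat.card (JS n k fun j => (m j : ℕ)) * ∏ j, (i j).choose (m j : ℕ) := by
  classical
  rw [← card_JI_descFactorial, ← Nat.card_eq_of_bijective _ (psi_bij (n := n) i)]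
  have h1 : Nat.card (TS n k i) = ∑ m : Fin k → Fin (n + 1),
      Nat.card (JS n k (fun j => (m j : ℕ)) ×
        ∀ j, {s : Finset (Fin (i j)) // s.card = (m j : ℕ)}) :=
    nat_card_sigma _
  rw [h1]
  refine Finset.sum_congr rfl fun m _ => ?_
  rw [Nat.card_prod, Nat.card_pi]
  congr 1
  refine Finset.prod_congr rfl fun j _ => ?_
  rw [Nat.card_eq_fintype_card, Fintype.card_finset_len]
  simp

end JIcount

section Analytic

lemma summable_mul_aux {ι ι' : Type*} (f0 : ι → ℝ) (g : ι' → ℝ) (h0 : Summable f0)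
    (ihs : Summable g) (hp1 : (0 : ι → ℝ) ≤ f0) (hp2 : (0 : ι' → ℝ) ≤ g) :
    Summable (fun p : ι × ι' => f0 p.1 * g p.2) :=
  Summable.mul_of_nonneg h0 ihs hp1 hp2

lemma hasSum_mul_aux {ι ι' : Type*} {f0 : ι → ℝ} {g : ι' → ℝ} {s t : ℝ} (h0 : HasSum f0 s)
    (ihs : HasSum g t) (hp1 : (0 : ι → ℝ) ≤ f0) (hp2 : (0 : ι' → ℝ) ≤ g) :
    HasSum (fun p : ι × ι' => f0 p.1 * g p.2) (s * t) :=
  HasSum.mul h0 ihs (summable_mul_aux f0 g h0.summable ihs.summable hp1 hp2)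

lemma hasSum_choose_div (m : ℕ) :
    HasSum (fun t : ℕ => ((t.choose m : ℝ) / 2 ^ t)) 2 := by
  have h : HasSum (fun t : ℕ => (((t + m).choose m : ℕ) : ℝ) * (1/2 : ℝ) ^ t) (1 / (1 - 1/2) ^ (m + 1)) :=
    hasSum_choose_mul_geometric_of_norm_lt_one (𝕜 := ℝ) m (r := 1/2) (by norm_num)
  have h2 : HasSum (fun t : ℕ => (((t + m).choose m : ℝ) / 2 ^ (t + m))) 2 := by
    have h3 := h.mul_left ((1/2 : ℝ) ^ m)
    have he : (fun t : ℕ => ((1/2 : ℝ) ^ m) * (((t + m).choose m : ℝ) * (1/2) ^ t))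
        = fun t : ℕ => (((t + m).choose m : ℝ) / 2 ^ (t + m)) := by
      funext t
      rw [pow_add, div_mul_eq_div_div, one_div_pow, one_div_pow]
      ring
    rw [he] at h3
    convert h3 using 1
    · rfl
    rw [show (1 : ℝ) - 1/2 = 1/2 by norm_num, pow_succ]
    rw [div_pow, one_pow]
    field_simp
  have h4 := (hasSum_nat_add_iff (f := fun t : ℕ => ((t.choose m : ℝ) / 2 ^ t)) m).1 h2
  have hz : ∑ i ∈ Finset.range m, ((i.choose m : ℝ) / 2 ^ i) = 0 :=
    Finset.sum_eq_zero fun i hi => by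
      rw [Nat.choose_eq_zero_of_lt (Finset.mem_range.1 hi)]; simp
  rw [hz, add_zero] at h4
  exact h4

set_option linter.deprecated false in
lemma hasSum_pi_prod : ∀ (k : ℕ) (f : Fin k → ℕ → ℝ) (a : Fin k → ℝ),
    (∀ j t, 0 ≤ f j t) → (∀ j, HasSum (f j) (a j)) →
    HasSum (fun i : Fin k → ℕ => ∏ j, f j (i j)) (∏ j, a j) := by
  intro k
  induction k with
  | zero =>
      intro f a _ _
      have h1 : (fun i : Fin 0 → ℕ => ∏ j, f j (i j)) = fun _ => 1 := by
        funext i; simp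
      rw [h1, show (∏ j : Fin 0, a j) = 1 by simp]
      simpa using hasSum_fintype (fun _ : Fin 0 → ℕ => (1 : ℝ))
  | succ k ih =>
      intro f a hpos hsum
      have ihs : HasSum (fun i : Fin k → ℕ => ∏ j : Fin k, f j.succ (i j))
          (∏ j : Fin k, a j.succ) :=
        ih (fun j => f j.succ) (fun j => a j.succ)
          (fun j t => hpos _ _) (fun j => hsum _)
      have hp1 : (0 : ℕ → ℝ) ≤ f 0 := fun t => hpos 0 t
      have hp2 : (0 : (Fin k → ℕ) → ℝ) ≤ fun i => ∏ j, f j.succ (i j) :=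
        fun i => Finset.prod_nonneg fun j _ => hpos _ _
      have hmul : HasSum (fun p : ℕ × (Fin k → ℕ) => f 0 p.1 * ∏ j : Fin k, f j.succ (p.2 j))
          (a 0 * ∏ j : Fin k, a j.succ) :=
        hasSum_mul_aux (ι := ℕ) (ι' := Fin k → ℕ) (f0 := f 0)
          (g := fun i : Fin k → ℕ => ∏ j : Fin k, f j.succ (i j))
          (s := a 0) (t := ∏ j : Fin k, a j.succ) (hsum 0) ihs hp1 hp2
      have key := ((Fin.consEquiv fun _ : Fin (k + 1) => ℕ).symm.hasSum_iff).2 hmul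
      have heq : ((fun p : ℕ × (Fin k → ℕ) => f 0 p.1 * ∏ j : Fin k, f j.succ (p.2 j))
          ∘ (Fin.consEquiv fun _ : Fin (k + 1) => ℕ).symm) = fun i : Fin (k + 1) → ℕ => ∏ j, f j (i j) := by
        funext i
        rw [Fin.prod_univ_succ]
        simp [Fin.consEquiv, Fin.removeNth, Fin.insertNthEquiv, Fin.tail]
      rw [heq] at key
      rw [Fin.prod_univ_succ]
      exact key

end Analytic

/-- For `k ≥ 1` and `n ≥ 1`, the number of `k`-tuples `((π₁,ℓ₁),…,(π_k,ℓ_k))` where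
`(π₁,…,π_k)` are set partitions of an `n`-set whose meet is `⊥` (the partition into
singletons) and each `ℓᵢ` is a linear order (an enumeration) of the blocks of `πᵢ`,
equals `2^{−k} · ∑_{i₁,…,i_k ≥ 0} (i₁⋯i_k)_n / 2^{i₁+⋯+i_k}`, where `(m)_n` is the
falling factorial, and the series converges. -/
theorem card_listed_kTuples_meet_bot (k n : ℕ) (hk : 1 ≤ k) (hn : 1 ≤ n) :
    (Nat.card {x : Σ π : Fin k → Finpartition (Finset.univ : Finset (Fin n)),
          ∀ i, {B // B ∈ (π i).parts} ≃ Fin (π i).parts.card //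
        Finset.univ.inf x.1 = ⊥} : ℝ) =
      ((2 : ℝ) ^ k)⁻¹ *
        ∑' i : Fin k → ℕ, (((∏ j, i j).descFactorial n : ℝ) / 2 ^ (∑ j, i j)) ∧
    Summable (fun i : Fin k → ℕ =>
      ((∏ j, i j).descFactorial n : ℝ) / 2 ^ (∑ j, i j)) := by
  classical
  set c : (Fin k → Fin (n + 1)) → ℕ := fun m => Nat.card (JS n k fun j => (m j : ℕ)) with hc
  have hpoint : ∀ i : Fin k → ℕ,
      ((∏ j, i j).descFactorial n : ℝ) / 2 ^ (∑ j, i j)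
        = ∑ m : Fin k → Fin (n + 1),
            (c m : ℝ) * ∏ j, (((i j).choose (m j : ℕ) : ℝ) / 2 ^ (i j)) := by
    intro i
    rw [descFactorial_eq i]
    push_cast
    rw [Finset.sum_div]
    refine Finset.sum_congr rfl fun m _ => ?_
    rw [Finset.prod_div_distrib, Finset.prod_pow_eq_pow_sum]
    ring
  have hG : ∀ m : Fin k → Fin (n + 1),
      HasSum (fun i : Fin k → ℕ =>
        (c m : ℝ) * ∏ j, (((i j).choose (m j : ℕ) : ℝ) / 2 ^ (i j)))
        ((c m : ℝ) * 2 ^ k) := by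
    intro m
    have h1 := (hasSum_pi_prod k (fun j t => ((t.choose (m j : ℕ) : ℝ)) / 2 ^ t)
      (fun _ => 2) (fun j t => by positivity)
      (fun j => hasSum_choose_div (m j : ℕ))).mul_left (c m : ℝ)
    simpa using h1
  have hF : HasSum (fun i : Fin k → ℕ => ((∏ j, i j).descFactorial n : ℝ) / 2 ^ (∑ j, i j))
      (∑ m : Fin k → Fin (n + 1), (c m : ℝ) * 2 ^ k) := by
    have h2 := hasSum_sum (s := (Finset.univ : Finset (Fin k → Fin (n + 1))))
      (fun m _ => hG m)
    have h3 : (fun i : Fin k → ℕ => ((∏ j, i j).descFactorial n : ℝ) / 2 ^ (∑ j, i j))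
        = fun i : Fin k → ℕ => ∑ m : Fin k → Fin (n + 1),
            (c m : ℝ) * ∏ j, (((i j).choose (m j : ℕ) : ℝ) / 2 ^ (i j)) :=
      funext hpoint
    rw [h3]
    exact h2
  refine ⟨?_, hF.summable⟩
  rw [hF.tsum_eq]
  have hcard : Nat.card {x : Σ π : Fin k → Finpartition (Finset.univ : Finset (Fin n)),
        ∀ i, {B // B ∈ (π i).parts} ≃ Fin (π i).parts.card //
      Finset.univ.inf x.1 = ⊥} = ∑ m : Fin k → Fin (n + 1), c m := card_XT hk
  rw [hcard]
  push_cast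
  rw [← Finset.sum_mul]
  have h2 : (2 : ℝ) ^ k ≠ 0 := by positivity
  field_simp
end
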